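/- arXiv:0711.4625 — 5 statements merged into one kernel-verified Lean document; each statement's English description precedes it below -/
import Mathlib

section
/- For every real number μ > 0, the Taylor coefficients a_n(μ) of F_μ(q) = ∏_{n=2}^∞ (1−q^n)^{−μ} do not satisfy the polynomial growth condition: there is no real α and constant C > 0 such that a_n(μ) ≤ C·n^α for all n ≥ 1. In other words, the coefficients of 1/∏_{n≥2}(1−q^n)^μ grow faster than any polynomial in n. -/
/-!
If `a_n(μ) ≤ C n^α`, then for `0 ≤ q < 1` the Taylor series gives `F_μ(q) ≤ B k! / (1 - q)^(k+1)`,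
polynomial in `(1 - q)⁻¹`. On the other hand, at `q = 1 - 1/(2M)` Bernoulli's inequality gives
`q^M ≥ 1/2`, so each factor `(1 - q^n)^(-μ)` with `2 ≤ n ≤ M` is at least `2^μ` and
`F_μ(q) ≥ 2^(μ(M-1))`, exponential in `M`. That the Taylor series of `F_μ` converges to `F_μ` on
`(-1, 1)` comes from the holomorphic extension `exp (-μ ∑ log (1 - z^(n+2)))` to the unit disc.
-/

/-- `Fmu μ q = ∏_{n=2}^∞ (1 - q^n)^{-μ}`, real powers via `rpow`. -/
noncomputable def Fmu (μ : ℝ) (q : ℝ) : ℝ := ∏' n : ℕ, (1 - q ^ (n + 2)) ^ (-μ)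

/-- The `n`-th Taylor coefficient of `f` at `0`. -/
noncomputable def taylorCoeff (f : ℝ → ℝ) (n : ℕ) : ℝ := iteratedDeriv n f 0 / n.factorial

open Filter Metric Topology Nat

lemma Complex.norm_log_one_sub_le {w : ℂ} (hw : ‖w‖ < 1) :
    ‖Complex.log (1 - w)‖ ≤ ‖w‖ / (1 - ‖w‖) := by
  have h := Complex.norm_log_one_add_le (z := -w) (by rwa [norm_neg])
  rw [← sub_eq_add_neg, norm_neg] at h
  have hw' : 0 < 1 - ‖w‖ := by linarith
  have hgap : ‖w‖ / (1 - ‖w‖) - (‖w‖ ^ 2 * (1 - ‖w‖)⁻¹ / 2 + ‖w‖) =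
      ‖w‖ ^ 2 / (2 * (1 - ‖w‖)) := by
    field_simp
    ring
  linarith [div_nonneg (sq_nonneg ‖w‖) (mul_nonneg zero_le_two hw'.le)]

lemma iteratedDeriv_eq_re_of_differentiableOn {f : ℝ → ℝ} {g : ℂ → ℂ} {R : ℝ}
    (hg : DifferentiableOn ℂ g (ball 0 R)) (hfg : ∀ x : ℝ, |x| < R → f x = (g x).re) (n : ℕ) :
    ∀ x : ℝ, |x| < R → iteratedDeriv n f x = (iteratedDeriv n g x).re := by
  induction n with
  | zero => simpa using hfg
  | succ n ih =>
    intro x hx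
    have hev : iteratedDeriv n f =ᶠ[𝓝 x] fun y : ℝ => (iteratedDeriv n g y).re := by
      filter_upwards [(isOpen_lt continuous_abs continuous_const).mem_nhds hx] with y hy
      exact ih y hy
    have hd : HasDerivAt (iteratedDeriv n g) (iteratedDeriv (n + 1) g x) x := by
      rw [iteratedDeriv_succ, iteratedDeriv_eq_iterate]
      refine ((hg.analyticOnNhd isOpen_ball).iterated_deriv n x ?_).differentiableAt.hasDerivAt
      simpa using hx
    rw [iteratedDeriv_succ, hev.deriv_eq]
    exact hd.real_of_complex.deriv

lemma hasSum_taylorCoeff_of_differentiableOn {f : ℝ → ℝ} {g : ℂ → ℂ} {R : ℝ}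
    (hg : DifferentiableOn ℂ g (ball 0 R)) (hfg : ∀ x : ℝ, |x| < R → f x = (g x).re)
    {x : ℝ} (hx : |x| < R) :
    HasSum (fun n => taylorCoeff f n * x ^ n) (f x) := by
  have h0 : |(0 : ℝ)| < R := by simpa using (abs_nonneg x).trans_lt hx
  have hxR : (x : ℂ) ∈ ball 0 R := by rwa [mem_ball_zero_iff, Complex.norm_real, Real.norm_eq_abs]
  have h := (Complex.hasSum_taylorSeries_on_ball (c := 0) hg hxR).mapL Complex.reCLM
  rw [hfg x hx, ← Complex.reCLM_apply]
  convert h using 2 with n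
  simp only [Complex.reCLM_apply, smul_eq_mul, sub_zero, taylorCoeff, Complex.ofReal_zero,
    iteratedDeriv_eq_re_of_differentiableOn hg hfg n 0 h0]
  rw [← Complex.ofReal_pow, ← Complex.ofReal_natCast, ← Complex.ofReal_inv, Complex.re_ofReal_mul,
    Complex.re_ofReal_mul]
  ring

lemma succ_pow_le_factorial_mul_choose (n k : ℕ) : (n + 1) ^ k ≤ k ! * (n + k).choose k := by
  have h := Nat.pow_sub_le_descFactorial (n + k) k
  rwa [Nat.descFactorial_eq_factorial_mul_choose, show n + k + 1 - k = n + 1 by omega] at h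

lemma le_of_hasSum_mul_pow_of_le_mul_succ_pow {a : ℕ → ℝ} {B q S : ℝ} {k : ℕ} (hB : 0 ≤ B)
    (hq0 : 0 ≤ q) (hq1 : q < 1) (ha : ∀ n, a n ≤ B * ((n : ℝ) + 1) ^ k)
    (hS : HasSum (fun n => a n * q ^ n) S) :
    S ≤ B * k ! / (1 - q) ^ (k + 1) := by
  have hgeom := (hasSum_choose_mul_geometric_of_norm_lt_one k
    (by rwa [Real.norm_eq_abs, abs_of_nonneg hq0] : ‖q‖ < 1)).mul_left (B * k !)
  rw [mul_one_div] at hgeom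
  refine hasSum_le (fun n => ?_) hS hgeom
  have hpow : ((n : ℝ) + 1) ^ k ≤ k ! * (n + k).choose k := by
    exact_mod_cast succ_pow_le_factorial_mul_choose n k
  calc a n * q ^ n ≤ B * ((n : ℝ) + 1) ^ k * q ^ n := by gcongr; exact ha n
    _ ≤ B * (k ! * (n + k).choose k) * q ^ n := by gcongr
    _ = B * k ! * ((n + k).choose k * q ^ n) := by ring

lemma exists_le_mul_succ_pow_of_le_mul_rpow {a : ℕ → ℝ} {C α : ℝ} (hC : 0 ≤ C)
    (ha : ∀ n : ℕ, 1 ≤ n → a n ≤ C * (n : ℝ) ^ α) :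
    ∃ B : ℝ, 0 ≤ B ∧ ∃ k : ℕ, ∀ n : ℕ, a n ≤ B * ((n : ℝ) + 1) ^ k := by
  refine ⟨max C (a 0), le_max_of_le_left hC, ⌈α⌉₊, fun n => ?_⟩
  rcases Nat.eq_zero_or_pos n with rfl | hn
  · simp
  have hn1 : (1 : ℝ) ≤ n := by exact_mod_cast hn
  calc a n ≤ C * (n : ℝ) ^ α := ha n hn
    _ ≤ C * (n : ℝ) ^ (⌈α⌉₊ : ℝ) := by gcongr; exact Nat.le_ceil α
    _ ≤ max C (a 0) * ((n : ℝ) + 1) ^ ⌈α⌉₊ := by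
        rw [Real.rpow_natCast]
        gcongr
        · exact le_max_left _ _
        · linarith

lemma half_le_one_sub_inv_two_mul_pow {m : ℕ} (hm : m ≠ 0) :
    1 / 2 ≤ (1 - 1 / (2 * m : ℝ)) ^ m := by
  have hm' : (1 : ℝ) ≤ m := by exact_mod_cast Nat.one_le_iff_ne_zero.mpr hm
  have h := one_add_mul_le_pow (a := -(1 / (2 * m : ℝ)))
    (by have : 1 / (2 * m : ℝ) ≤ 1 / 2 := by gcongr; linarith
        linarith) m
  rw [← sub_eq_add_neg] at h
  calc (1 : ℝ) / 2 = 1 + m * -(1 / (2 * m)) := by field_simp; ring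
    _ ≤ _ := h

lemma eventually_mul_pow_lt_exp {c : ℝ} (hc : 0 < c) (A : ℝ) (j : ℕ) :
    ∀ᶠ x : ℝ in atTop, A * x ^ j < Real.exp (c * x) := by
  filter_upwards [(tendsto_exp_mul_div_rpow_atTop j c hc).eventually_gt_atTop A,
    eventually_gt_atTop 0] with x hx hx0
  rw [Real.rpow_natCast, lt_div_iff₀ (by positivity)] at hx
  exact hx

lemma one_sub_pow_pos {q : ℝ} (hq : |q| < 1) {n : ℕ} (hn : n ≠ 0) : 0 < 1 - q ^ n :=
  sub_pos.2 ((le_abs_self _).trans_lt (abs_pow q n ▸ pow_lt_one₀ (abs_nonneg q) hq hn))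

lemma summable_log_one_sub_pow {q : ℝ} (hq : |q| < 1) :
    Summable fun n : ℕ => Real.log (1 - q ^ (n + 2)) := by
  simpa only [← sub_eq_add_neg] using Real.summable_log_one_add_of_summable
    ((summable_nat_add_iff 2).mpr (summable_geometric_of_abs_lt_one hq)).neg

lemma differentiableOn_tsum_log_one_sub_pow :
    DifferentiableOn ℂ (fun z : ℂ => ∑' n : ℕ, Complex.log (1 - z ^ (n + 2))) (ball 0 1) := by
  intro z hz
  obtain ⟨r, hzr, hr1⟩ := exists_between (mem_ball_zero_iff.mp hz)
  have hr0 : 0 ≤ r := (norm_nonneg z).trans hzr.le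
  have hpow : ∀ n : ℕ, ∀ w ∈ ball (0 : ℂ) r, ‖w ^ (n + 2)‖ ≤ r ^ (n + 2) := fun n w hw =>
    norm_pow w _ ▸ pow_le_pow_left₀ (norm_nonneg w) (mem_ball_zero_iff.mp hw).le _
  have hlt : ∀ n : ℕ, r ^ (n + 2) ≤ r := fun n => pow_le_of_le_one hr0 hr1.le (by omega)
  suffices DifferentiableOn ℂ (fun z : ℂ => ∑' n : ℕ, Complex.log (1 - z ^ (n + 2))) (ball 0 r)
    from (this.differentiableAt (isOpen_ball.mem_nhds (mem_ball_zero_iff.mpr hzr)))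
      |>.differentiableWithinAt
  refine Complex.differentiableOn_tsum_of_summable_norm
    ((summable_geometric_of_lt_one hr0 hr1).div_const (1 - r)) (fun n w hw => ?_) isOpen_ball
    (fun n w hw => ?_)
  · have hslit : 1 - w ^ (n + 2) ∈ Complex.slitPlane := by
      rw [sub_eq_add_neg]
      exact Complex.mem_slitPlane_of_norm_lt_one
        (by rw [norm_neg]; exact ((hpow n w hw).trans (hlt n)).trans_lt hr1)
    exact (DifferentiableAt.clog (f := fun z => 1 - z ^ (n + 2)) (by fun_prop) hslit)
      |>.differentiableWithinAt
  · have hw := hpow n w hw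
    calc ‖Complex.log (1 - w ^ (n + 2))‖ ≤ ‖w ^ (n + 2)‖ / (1 - ‖w ^ (n + 2)‖) :=
          Complex.norm_log_one_sub_le ((hw.trans (hlt n)).trans_lt hr1)
      _ ≤ r ^ n / (1 - r) := by
          refine div_le_div₀ (pow_nonneg hr0 n) ?_ (by linarith) (by linarith [hlt n])
          exact hw.trans (pow_le_pow_of_le_one hr0 hr1.le (by omega))

lemma Fmu_eq_exp_tsum (μ : ℝ) {q : ℝ} (hq : |q| < 1) :
    Fmu μ q = Real.exp (-μ * ∑' n : ℕ, Real.log (1 - q ^ (n + 2))) := by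
  have hpos (n : ℕ) : 0 < 1 - q ^ (n + 2) := one_sub_pow_pos hq (by omega)
  have hlog (n : ℕ) : Real.log ((1 - q ^ (n + 2)) ^ (-μ)) = -μ * Real.log (1 - q ^ (n + 2)) :=
    Real.log_rpow (hpos n) _
  rw [Fmu, ← Real.rexp_tsum_eq_tprod (fun n => Real.rpow_pos_of_pos (hpos n) _)
    (by simpa only [hlog] using (summable_log_one_sub_pow hq).mul_left (-μ)),
    ← tsum_mul_left]
  simp only [hlog]

lemma ofReal_Fmu (μ : ℝ) {q : ℝ} (hq : |q| < 1) :
    (Fmu μ q : ℂ) = Complex.exp (-μ * ∑' n : ℕ, Complex.log (1 - (q : ℂ) ^ (n + 2))) := by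
  have hlog (n : ℕ) :
      ((Real.log (1 - q ^ (n + 2)) : ℝ) : ℂ) = Complex.log (1 - (q : ℂ) ^ (n + 2)) := by
    rw [Complex.ofReal_log (one_sub_pow_pos hq (by omega)).le]
    push_cast
    rfl
  rw [Fmu_eq_exp_tsum μ hq, Complex.ofReal_exp, Complex.ofReal_mul, Complex.ofReal_tsum]
  simp only [hlog, Complex.ofReal_neg]

lemma hasSum_taylorCoeff_Fmu (μ : ℝ) {q : ℝ} (hq : |q| < 1) :
    HasSum (fun n => taylorCoeff (Fmu μ) n * q ^ n) (Fmu μ q) :=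
  hasSum_taylorCoeff_of_differentiableOn
    ((differentiableOn_tsum_log_one_sub_pow.const_mul _).cexp)
    (fun x hx => by rw [← ofReal_Fmu μ hx, Complex.ofReal_re]) hq

lemma exp_mul_log_two_le_Fmu {μ : ℝ} (hμ : 0 ≤ μ) {q : ℝ} (hq0 : 0 ≤ q) (hq1 : q < 1) {m : ℕ}
    (hm : 1 / 2 ≤ q ^ (m + 2)) :
    Real.exp (μ * Real.log 2 * (m + 1)) ≤ Fmu μ q := by
  have hq : |q| < 1 := by rwa [abs_of_nonneg hq0]
  have hpos (n : ℕ) : 0 < 1 - q ^ (n + 2) := one_sub_pow_pos hq (by omega)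
  have hnonneg (n : ℕ) : 0 ≤ -Real.log (1 - q ^ (n + 2)) :=
    neg_nonneg.2 (Real.log_nonpos (hpos n).le (by linarith [pow_nonneg hq0 (n + 2)]))
  have hfirst : ∀ n ∈ Finset.range (m + 1), Real.log 2 ≤ -Real.log (1 - q ^ (n + 2)) := by
    intro n hn
    have hqn : q ^ (m + 2) ≤ q ^ (n + 2) :=
      pow_le_pow_of_le_one hq0 hq1.le (by simp at hn; omega)
    have := Real.log_le_log (hpos n) (show 1 - q ^ (n + 2) ≤ 2⁻¹ by linarith)
    rw [Real.log_inv] at this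
    linarith
  have hsum : (m + 1) * Real.log 2 ≤ -∑' n : ℕ, Real.log (1 - q ^ (n + 2)) := by
    rw [← tsum_neg]
    calc (m + 1) * Real.log 2 = ∑ n ∈ Finset.range (m + 1), Real.log 2 := by simp
      _ ≤ ∑ n ∈ Finset.range (m + 1), -Real.log (1 - q ^ (n + 2)) := Finset.sum_le_sum hfirst
      _ ≤ _ := (summable_log_one_sub_pow hq).neg.sum_le_tsum _ fun n _ => hnonneg n
  rw [Fmu_eq_exp_tsum μ hq, Real.exp_le_exp]
  nlinarith

/-- The Taylor coefficients of `F_μ(q) = ∏_{n≥2} (1-q^n)^{-μ}` at `0` grow faster than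
any polynomial in `n`: there is no `C > 0` and real `α` with `a_n(μ) ≤ C·n^α` for all `n ≥ 1`. -/
theorem coeffs_of_Fmu_not_polynomial_growth (μ : ℝ) (hμ : 0 < μ) :
    ¬ ∃ C : ℝ, 0 < C ∧ ∃ α : ℝ, ∀ n : ℕ, 1 ≤ n →
      taylorCoeff (Fmu μ) n ≤ C * (n : ℝ) ^ α := by
  rintro ⟨C, hC, α, hα⟩
  obtain ⟨B, hB, k, hbound⟩ := exists_le_mul_succ_pow_of_le_mul_rpow hC.le hα
  set c := μ * Real.log 2
  obtain ⟨m, hm⟩ := ((tendsto_atTop_add_const_right _ 2 tendsto_natCast_atTop_atTop).eventually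
    (eventually_mul_pow_lt_exp (mul_pos hμ (Real.log_pos one_lt_two))
      (Real.exp c * (B * k ! * 2 ^ (k + 1))) (k + 1))).exists
  set q : ℝ := 1 - 1 / (2 * ((m + 2 : ℕ) : ℝ))
  have hq0 : 0 ≤ q := sub_nonneg.2 (div_le_one_of_le₀ (by norm_cast; omega) (by positivity))
  have hq1 : q < 1 := sub_lt_self _ (by positivity)
  have lower :=
    exp_mul_log_two_le_Fmu hμ.le hq0 hq1 (half_le_one_sub_inv_two_mul_pow (by omega))
  have upper := le_of_hasSum_mul_pow_of_le_mul_succ_pow hB hq0 hq1 hbound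
    (hasSum_taylorCoeff_Fmu μ (by rwa [abs_of_nonneg hq0]))
  refine hm.not_ge ?_
  calc Real.exp (c * ((m : ℝ) + 2)) = Real.exp c * Real.exp (c * (m + 1)) := by
        rw [← Real.exp_add]; ring_nf
    _ ≤ Real.exp c * (B * k ! / (1 - q) ^ (k + 1)) := by gcongr; exact lower.trans upper
    _ = _ := by
        simp only [q, sub_sub_cancel, one_div, inv_pow, div_inv_eq_mul]
        push_cast
        rw [mul_pow]
        ring
end

section
/- For every real number α, the sequence n ↦ (number of partitions of n all of whose parts are at least 2) is not O(n^α); that is, the Taylor coefficients of 1/∏_{n≥2}(1−q^n) grow faster than any polynomial in n. -/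
/-- The number of partitions of `n` all of whose parts are at least `2`. -/
noncomputable def partitionsMinTwo (n : ℕ) : ℕ :=
  Nat.card {p : n.Partition // ∀ i ∈ p.parts, 2 ≤ i}

/-! Every set `S ⊆ {2, …, k + 1}` has sum at most `k (k + 1)`, so adding the single part
`n - ∑ S > k + 1` turns it into a partition of `n` into parts `≥ 2` whenever `n > (k + 1)²`;
the set is recovered as the parts that are at most `k + 1`. Hence `(k + 2)²` has at least `2 ^ k`
such partitions, and a bound `C n ^ α` would make `2 ^ k = O((k + 2) ^ {2α})`, which exponential
growth forbids. -/

open Finset Filter Asymptotics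

namespace Nat.Partition

@[simps]
def ofFinsetWithRemainder {n : ℕ} (S : Finset ℕ) (hS : ∀ i ∈ S, 0 < i)
    (h : ∑ i ∈ S, i < n) : n.Partition where
  parts := (n - ∑ i ∈ S, i) ::ₘ S.val
  parts_pos {i} hi := by
    rcases Multiset.mem_cons.mp hi with rfl | hi
    · omega
    · exact hS i hi
  parts_sum := by
    rw [Multiset.sum_cons, Finset.sum_val]
    exact Nat.sub_add_cancel h.le

theorem filter_le_parts_ofFinsetWithRemainder {n m : ℕ} {S : Finset ℕ} (hS : ∀ i ∈ S, 0 < i)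
    (h : ∑ i ∈ S, i < n) (hSm : ∀ i ∈ S, i ≤ m) (hm : m < n - ∑ i ∈ S, i) :
    (ofFinsetWithRemainder S hS h).parts.filter (· ≤ m) = S.val := by
  rw [ofFinsetWithRemainder_parts, Multiset.filter_cons_of_neg _ (by omega),
    Multiset.filter_eq_self.mpr hSm]

end Nat.Partition

theorem Finset.sum_le_of_subset_Icc {a b : ℕ} {S : Finset ℕ} (hS : S ⊆ Icc a b) :
    ∑ i ∈ S, i ≤ (b + 1 - a) * b :=
  calc ∑ i ∈ S, i ≤ #S * b := by
        simpa using sum_le_card_nsmul S id b fun i hi ↦ (mem_Icc.mp (hS hi)).2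
    _ ≤ (b + 1 - a) * b := by
        gcongr
        simpa using card_le_card hS

theorem two_pow_le_partitionsMinTwo_of_forall_lt_sub {k n : ℕ}
    (h : ∀ S ⊆ Icc 2 (k + 1), k + 1 < n - ∑ i ∈ S, i) : 2 ^ k ≤ partitionsMinTwo n := by
  have hsum : ∀ S ⊆ Icc 2 (k + 1), ∑ i ∈ S, i < n := fun S hS ↦ by
    have := h S hS
    omega
  have hpos : ∀ S ⊆ Icc 2 (k + 1), ∀ i ∈ S, 0 < i := fun S hS i hi ↦ by
    have := (mem_Icc.mp (hS hi)).1
    omega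
  let extend (S : (Icc 2 (k + 1)).powerset) : {p : n.Partition // ∀ i ∈ p.parts, 2 ≤ i} :=
    have hS := mem_powerset.mp S.2
    ⟨.ofFinsetWithRemainder S.1 (hpos _ hS) (hsum _ hS), fun i hi ↦ by
      rcases Multiset.mem_cons.mp hi with rfl | hi
      · have := h _ hS
        omega
      · exact (mem_Icc.mp (hS hi)).1⟩
  have hf : Function.Injective extend := by
    rintro ⟨S, hS⟩ ⟨T, hT⟩ hST
    rw [mem_powerset] at hS hT
    have := congrArg (fun p ↦ p.1.parts.filter (· ≤ k + 1)) hST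
    simp only [extend, Nat.Partition.filter_le_parts_ofFinsetWithRemainder _ _
      (fun i hi ↦ (mem_Icc.mp (hS hi)).2) (h S hS),
      Nat.Partition.filter_le_parts_ofFinsetWithRemainder _ _
      (fun i hi ↦ (mem_Icc.mp (hT hi)).2) (h T hT)] at this
    exact Subtype.ext (val_injective this)
  calc 2 ^ k = Nat.card (Icc 2 (k + 1)).powerset := by
        rw [Nat.card_eq_finsetCard, card_powerset, Nat.card_Icc]; rfl
    _ ≤ partitionsMinTwo n := Nat.card_le_card_of_injective extend hf

theorem two_pow_le_partitionsMinTwo {k n : ℕ} (h : (k + 1) ^ 2 < n) :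
    2 ^ k ≤ partitionsMinTwo n :=
  two_pow_le_partitionsMinTwo_of_forall_lt_sub fun S hS ↦ by
    have hsum : ∑ i ∈ S, i ≤ k * (k + 1) := by
      simpa using Finset.sum_le_of_subset_Icc (a := 2) (b := k + 1) hS
    have hsq : (k + 1) ^ 2 = k * (k + 1) + (k + 1) := by ring
    omega

theorem isLittleO_rpow_const_pow_of_one_lt (s : ℝ) {r : ℝ} (hr : 1 < r) :
    (fun n : ℕ ↦ (n : ℝ) ^ s) =o[atTop] fun n ↦ r ^ n := by
  refine ((isLittleO_rpow_exp_pos_mul_atTop s (Real.log_pos hr)).comp_tendsto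
    tendsto_natCast_atTop_atTop).congr_right fun n ↦ ?_
  rw [Function.comp_apply, ← Real.rpow_natCast, Real.rpow_def_of_pos (by linarith)]

/-- The number of partitions of `n` with all parts at least `2` (the `n`-th Taylor
coefficient of `1/∏_{n≥2}(1-q^n)`) is not `O(n^α)` for any real `α`. -/
theorem partitionsMinTwo_not_bigO (α : ℝ) :
    ¬ ∃ C : ℝ, 0 < C ∧ ∀ n : ℕ, 1 ≤ n → (partitionsMinTwo n : ℝ) ≤ C * (n : ℝ) ^ α := by
  rintro ⟨C, -, hC⟩
  have hbound : ∀ n : ℕ, 2 ≤ n → (2 : ℝ) ^ n ≤ 4 * C * (n : ℝ) ^ (2 * α) := by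
    intro n hn
    obtain ⟨k, rfl⟩ := Nat.exists_eq_add_of_le' hn
    have hp : 2 ^ k ≤ partitionsMinTwo ((k + 2) ^ 2) := two_pow_le_partitionsMinTwo (by nlinarith)
    calc (2 : ℝ) ^ (k + 2) = 4 * 2 ^ k := by ring
      _ ≤ 4 * (C * (((k + 2) ^ 2 : ℕ) : ℝ) ^ α) := by
        gcongr
        exact le_trans (by exact_mod_cast hp) (hC _ (by positivity : 0 < (k + 2) ^ 2))
      _ = 4 * C * ((k + 2 : ℕ) : ℝ) ^ (2 * α) := by
        rw [Nat.cast_pow, ← Real.rpow_natCast, ← Real.rpow_mul (by positivity)]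
        push_cast
        ring
  have hO : (fun n : ℕ ↦ (2 : ℝ) ^ n) =O[atTop] fun n ↦ (n : ℝ) ^ (2 * α) :=
    IsBigO.of_bound (4 * C) (eventually_atTop.mpr ⟨2, fun n hn ↦ by
      rw [Real.norm_of_nonneg (by positivity), Real.norm_of_nonneg (by positivity)]
      exact hbound n hn⟩)
  exact hO.not_isLittleO (Frequently.of_forall fun n ↦ by positivity)
    (isLittleO_rpow_const_pow_of_one_lt (2 * α) one_lt_two)
end

section
/- Let (a_n)_{n≥0} be a sequence of nonnegative real numbers and (c_n)_{n≥0} a sequence of real numbers satisfying the polynomial growth condition. Suppose that for every q ∈ (0,1) both series Σ_{n≥0} a_n q^n and Σ_{n≥0} c_n q^n converge and Σ_{n≥0} a_n q^n ≤ Σ_{n≥0} c_n q^n. Then (a_n) also satisfies the polynomial growth condition. Equivalently: a power series with nonnegative coefficients growing faster than every polynomial cannot be bounded on (0,1) by a power series whose coefficients satisfy the polynomial growth condition. -/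
/-- A sequence of reals satisfies the polynomial growth condition if there are `C > 0`
and `α : ℝ` with `|x n| ≤ C·n^α` for all `n ≥ 1`. -/
def PolyGrowth (x : ℕ → ℝ) : Prop :=
  ∃ C > (0 : ℝ), ∃ α : ℝ, ∀ n : ℕ, 1 ≤ n → |x n| ≤ C * (n : ℝ) ^ α

open Real Nat

/-! Polynomial growth of `c` means `|c n| ≤ D (n + 1) ^ k`, and comparison with
`∑ C(n + k, k) q ^ n = (1 - q)⁻¹ ^ (k + 1)` gives
`∑ c n q ^ n ≤ D k! (1 - q)⁻¹ ^ (k + 1)`. As `a ≥ 0`, the single term `a m q ^ m`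
obeys the same bound. At `q = m / (m + 1)` we have `q⁻¹ ^ m = (1 + 1/m) ^ m ≤ e` and
`(1 - q)⁻¹ = m + 1`, so `a m ≤ e D k! (m + 1) ^ (k + 1)`. -/

lemma add_one_pow_le_factorial_mul_choose (n k : ℕ) :
    ((n : ℝ) + 1) ^ k ≤ k ! * (n + k).choose k := by
  have h := Nat.pow_le_choose (α := ℝ) k (n + k)
  rw [show n + k + 1 - k = n + 1 by omega, div_le_iff₀' (by positivity)] at h
  exact_mod_cast h

lemma PolyGrowth.exists_abs_le_mul_add_one_pow {x : ℕ → ℝ} (hx : PolyGrowth x) :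
    ∃ D > (0 : ℝ), ∃ k : ℕ, ∀ n : ℕ, |x n| ≤ D * ((n : ℝ) + 1) ^ k := by
  obtain ⟨C, hC, α, hxC⟩ := hx
  refine ⟨|x 0| + C, by positivity, ⌈α⌉₊, fun n => ?_⟩
  rcases Nat.eq_zero_or_pos n with rfl | hn
  · simp [hC.le]
  have hn1 : (1 : ℝ) ≤ n := by exact_mod_cast hn
  calc |x n| ≤ C * (n : ℝ) ^ α := hxC n hn
    _ ≤ C * (n : ℝ) ^ ⌈α⌉₊ := by
      rw [← Real.rpow_natCast]; gcongr
      exact Nat.le_ceil α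
    _ ≤ (|x 0| + C) * ((n : ℝ) + 1) ^ ⌈α⌉₊ := by
      gcongr
      · linarith [abs_nonneg (x 0)]
      · linarith

lemma polyGrowth_of_abs_le_mul_add_one_pow {x : ℕ → ℝ} {D : ℝ} {k : ℕ} (hD : 0 < D)
    (hx : ∀ n : ℕ, 1 ≤ n → |x n| ≤ D * ((n : ℝ) + 1) ^ k) : PolyGrowth x := by
  refine ⟨2 ^ k * D, by positivity, k, fun n hn => ?_⟩
  have hn1 : (1 : ℝ) ≤ n := by exact_mod_cast hn
  calc |x n| ≤ D * ((n : ℝ) + 1) ^ k := hx n hn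
    _ ≤ D * (2 * n) ^ k := by gcongr; linarith
    _ = 2 ^ k * D * (n : ℝ) ^ (k : ℝ) := by rw [Real.rpow_natCast, mul_pow]; ring

section PowerSeries

variable {c : ℕ → ℝ} {D : ℝ} {k : ℕ} {q : ℝ}

lemma abs_mul_pow_le_of_abs_le_mul_add_one_pow (hc : ∀ n, |c n| ≤ D * ((n : ℝ) + 1) ^ k)
    (n : ℕ) : |c n * q ^ n| ≤ D * k ! * ((n + k).choose k * |q| ^ n) := by
  have hD : 0 ≤ D := by simpa using (abs_nonneg _).trans (hc 0)
  rw [abs_mul, abs_pow, ← mul_assoc]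
  gcongr
  calc |c n| ≤ D * ((n : ℝ) + 1) ^ k := hc n
    _ ≤ D * (k ! * (n + k).choose k) := by gcongr; exact add_one_pow_le_factorial_mul_choose n k
    _ = D * k ! * (n + k).choose k := by ring

lemma summable_mul_pow_of_abs_le_mul_add_one_pow (hc : ∀ n, |c n| ≤ D * ((n : ℝ) + 1) ^ k)
    (hq : |q| < 1) : Summable fun n => c n * q ^ n := by
  have hq' : ‖|q|‖ < 1 := by rwa [norm_of_nonneg (abs_nonneg q)]
  exact .of_norm_bounded ((summable_choose_mul_geometric_of_norm_lt_one k hq').mul_left (D * k !))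
    fun n => by simpa only [norm_eq_abs] using abs_mul_pow_le_of_abs_le_mul_add_one_pow hc n

lemma tsum_mul_pow_le_of_abs_le_mul_add_one_pow (hc : ∀ n, |c n| ≤ D * ((n : ℝ) + 1) ^ k)
    (hq : |q| < 1) : ∑' n, c n * q ^ n ≤ D * k ! / (1 - |q|) ^ (k + 1) := by
  have hq' : ‖|q|‖ < 1 := by rwa [norm_of_nonneg (abs_nonneg q)]
  calc ∑' n, c n * q ^ n ≤ ∑' n, D * k ! * ((n + k).choose k * |q| ^ n) :=
        (summable_mul_pow_of_abs_le_mul_add_one_pow hc hq).tsum_le_tsum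
          (fun n => (le_abs_self _).trans (abs_mul_pow_le_of_abs_le_mul_add_one_pow hc n))
          ((summable_choose_mul_geometric_of_norm_lt_one k hq').mul_left _)
    _ = D * k ! / (1 - |q|) ^ (k + 1) := by
      rw [tsum_mul_left, tsum_choose_mul_geometric_of_norm_lt_one k hq', mul_one_div]

end PowerSeries

theorem polyGrowth_of_powerSeries_le_general (a c : ℕ → ℝ) (ha0 : ∀ n, 0 ≤ a n)
    (hc : PolyGrowth c)
    (hsa : ∀ q : ℝ, q ∈ Set.Ioo (0 : ℝ) 1 → Summable (fun n => a n * q ^ n))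
    (hle : ∀ q : ℝ, q ∈ Set.Ioo (0 : ℝ) 1 →
      (∑' n : ℕ, a n * q ^ n) ≤ ∑' n : ℕ, c n * q ^ n) :
    PolyGrowth a := by
  obtain ⟨D, hD, k, hcD⟩ := hc.exists_abs_le_mul_add_one_pow
  refine polyGrowth_of_abs_le_mul_add_one_pow (D := exp 1 * (D * k !)) (k := k + 1)
    (by positivity) fun m hm => ?_
  have hm0 : (0 : ℝ) < m := by exact_mod_cast hm
  set q : ℝ := m / (m + 1) with hq_def
  have hq : q ∈ Set.Ioo 0 1 := ⟨by positivity, (div_lt_one (by positivity)).2 (by linarith)⟩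
  have hq_abs : |q| = q := abs_of_pos hq.1
  have hq_inv : q⁻¹ = 1 + (m : ℝ)⁻¹ := by rw [hq_def]; field_simp
  have h_one_sub_q : 1 - q = ((m : ℝ) + 1)⁻¹ := by rw [hq_def]; field_simp; ring
  rw [abs_of_nonneg (ha0 m)]
  calc a m = q⁻¹ ^ m * (a m * q ^ m) := by
        rw [← mul_assoc, mul_comm _ (a m), mul_assoc, ← mul_pow, inv_mul_cancel₀ hq.1.ne',
          one_pow, mul_one]
    _ ≤ exp 1 * ∑' n, a n * q ^ n :=
      mul_le_mul (hq_inv ▸ one_add_inv_pow_le_exp)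
        ((hsa q hq).le_tsum m fun n _ => mul_nonneg (ha0 n) (pow_nonneg hq.1.le n))
        (mul_nonneg (ha0 m) (pow_nonneg hq.1.le m)) (exp_pos 1).le
    _ ≤ exp 1 * (D * k ! / (1 - q) ^ (k + 1)) := by
      gcongr
      have hq_lt : |q| < 1 := by rw [hq_abs]; exact hq.2
      simpa only [hq_abs] using
        (hle q hq).trans (tsum_mul_pow_le_of_abs_le_mul_add_one_pow hcD hq_lt)
    _ = exp 1 * (D * k !) * ((m : ℝ) + 1) ^ (k + 1) := by
      rw [h_one_sub_q, inv_pow, div_inv_eq_mul]; ring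

/-- If `a` is a nonnegative sequence, `c` has polynomial growth, and for every
`q ∈ (0,1)` both power series converge with `∑ a_n q^n ≤ ∑ c_n q^n`, then `a` also
has polynomial growth. -/
theorem polyGrowth_of_powerSeries_le (a c : ℕ → ℝ) (ha0 : ∀ n, 0 ≤ a n)
    (hc : PolyGrowth c)
    (hsa : ∀ q : ℝ, q ∈ Set.Ioo (0 : ℝ) 1 → Summable (fun n => a n * q ^ n))
    (hsc : ∀ q : ℝ, q ∈ Set.Ioo (0 : ℝ) 1 → Summable (fun n => c n * q ^ n))
    (hle : ∀ q : ℝ, q ∈ Set.Ioo (0 : ℝ) 1 →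
      (∑' n : ℕ, a n * q ^ n) ≤ ∑' n : ℕ, c n * q ^ n) :
    PolyGrowth a :=
  polyGrowth_of_powerSeries_le_general a c ha0 hc hsa hle
end

section
/- For every real number μ > 0, all Taylor coefficients a_n(μ) of F_μ at 0 are nonnegative, and a_0(μ) = 1. -/
/-!
For `|q| < 1` we have `F_μ(q) = exp (μ L(q))` with
`L(q) = ∑_{n ≥ 2} -log (1 - q^n) = ∑_{n ≥ 2} ∑_{k ≥ 1} q^{nk} / k`.
Regrouping this absolutely convergent double series by the exponent `nk` exhibits `L` as a power
series with nonnegative coefficients and `L(0) = 0`. The exponential series has nonnegative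
coefficients too, and substituting one power series with nonnegative coefficients into another
keeps the coefficients nonnegative.
-/

open FormalMultilinearSeries
open scoped NNReal

theorem FormalMultilinearSeries.coeff_comp_nonneg {𝕜 : Type*} [NontriviallyNormedField 𝕜]
    [PartialOrder 𝕜] [IsOrderedRing 𝕜] {q p : FormalMultilinearSeries 𝕜 𝕜 𝕜}
    (hq : ∀ n, 0 ≤ q.coeff n) (hp : ∀ n, 0 ≤ p.coeff n) (n : ℕ) : 0 ≤ (q.comp p).coeff n := by
  rw [coeff, FormalMultilinearSeries.comp, sum_apply]
  refine Finset.sum_nonneg fun c _ => ?_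
  rw [compAlongComposition_apply, apply_eq_prod_smul_coeff, smul_eq_mul]
  refine mul_nonneg (Finset.prod_nonneg fun i _ => ?_) (hq _)
  simpa [applyComposition] using hp (c.blocksFun i)

theorem NormedSpace.coeff_expSeries_nonneg (n : ℕ) : 0 ≤ (expSeries ℝ ℝ).coeff n := by
  simp [coeff, expSeries, List.prod_ofFn]

theorem HasFPowerSeriesAt.rexp_comp {f : ℝ → ℝ} {p : FormalMultilinearSeries ℝ ℝ ℝ}
    (hf : HasFPowerSeriesAt f p 0) (hf0 : f 0 = 0) :
    HasFPowerSeriesAt (fun x => Real.exp (f x)) ((NormedSpace.expSeries ℝ ℝ).comp p) 0 :=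
  (hf0 ▸ Real.exp_eq_exp_ℝ ▸ NormedSpace.exp_hasFPowerSeriesAt_zero).comp hf

theorem HasFPowerSeriesAt.taylorCoeff_eq_coeff {f : ℝ → ℝ} {p : FormalMultilinearSeries ℝ ℝ ℝ}
    (hf : HasFPowerSeriesAt f p 0) (n : ℕ) : taylorCoeff f n = p.coeff n := by
  rw [hf.eq_formalMultilinearSeries hf.analyticAt.hasFPowerSeriesAt, coeff_ofScalars, taylorCoeff]

theorem hasSum_tsum_fiber_mul_pow {β : Type*} (φ : β → ℕ) (a : β → ℝ) {y : ℝ}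
    (ha : Summable fun b => a b * y ^ φ b) :
    HasSum (fun m => (∑' b : φ ⁻¹' {m}, a b) * y ^ m) (∑' b, a b * y ^ φ b) := by
  have hfiber (m : ℕ) :
      ∑' b : φ ⁻¹' {m}, a b * y ^ φ b = (∑' b : φ ⁻¹' {m}, a b) * y ^ m := by
    rw [← tsum_mul_right]
    exact tsum_congr fun b => by rw [b.2]
  simpa only [hfiber] using ha.hasSum.tsum_fiberwise φ

theorem hasFPowerSeriesOnBall_tsum_mul_pow {β : Type*} (φ : β → ℕ) (a : β → ℝ) {r : ℝ≥0}
    (hr : 0 < r) (ha : ∀ y : ℝ, |y| < r → Summable fun b => a b * y ^ φ b) :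
    HasFPowerSeriesOnBall (fun y => ∑' b, a b * y ^ φ b)
      (ofScalars ℝ fun m => ∑' b : φ ⁻¹' {m}, a b) 0 r where
  r_le := ENNReal.le_of_forall_nnreal_lt fun s hs => by
    have hs' : |(s : ℝ)| < r := by simpa using hs
    refine le_radius_of_tendsto _ (l := 0) ?_
    simpa [ofScalars_norm, abs_mul] using
      (hasSum_tsum_fiber_mul_pow φ a (ha s hs')).summable.tendsto_atTop_zero.norm
  r_pos := by simpa using hr
  hasSum := fun {y} hy => by
    have hy' : |y| < r := by simpa using hy
    simpa [ofScalars_apply_eq, mul_comm] using hasSum_tsum_fiber_mul_pow φ a (ha y hy')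

theorem abs_pow_lt_one {R : Type*} [Ring R] [LinearOrder R] [IsStrictOrderedRing R] {x : R}
    (hx : |x| < 1) {n : ℕ} (hn : n ≠ 0) : |x ^ n| < 1 :=
  abs_pow x n ▸ pow_lt_one₀ (abs_nonneg x) hx hn

/-- The pair `(n, k)` stands for the term `q^((n+2)(k+1)) / (k+1)` of `-log (1 - q^(n+2))`. -/
def eulerIndex (p : ℕ × ℕ) : ℕ := (p.1 + 2) * (p.2 + 1)

noncomputable def eulerWeight (p : ℕ × ℕ) : ℝ := ((p.2 : ℝ) + 1)⁻¹

noncomputable def eulerLogCoeff (m : ℕ) : ℝ := ∑' p : eulerIndex ⁻¹' {m}, eulerWeight p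

theorem eulerLogCoeff_nonneg (m : ℕ) : 0 ≤ eulerLogCoeff m :=
  tsum_nonneg fun p => by unfold eulerWeight; positivity

theorem summable_eulerWeight_mul_pow {q : ℝ} (hq : |q| < 1) :
    Summable fun p => eulerWeight p * q ^ eulerIndex p := by
  have hgeom := summable_geometric_of_lt_one (abs_nonneg q) hq
  refine Summable.of_norm_bounded
    (hgeom.mul_of_nonneg hgeom (fun _ => by positivity) (fun _ => by positivity)) fun p => ?_
  have hweight : |eulerWeight p| ≤ 1 := by
    rw [eulerWeight, abs_of_pos (by positivity)]
    exact inv_le_one_of_one_le₀ (by simp)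
  have hindex : p.1 + p.2 ≤ eulerIndex p := by unfold eulerIndex; nlinarith
  calc ‖eulerWeight p * q ^ eulerIndex p‖ ≤ 1 * |q| ^ eulerIndex p := by
        rw [Real.norm_eq_abs, abs_mul, abs_pow]; gcongr
    _ ≤ |q| ^ p.1 * |q| ^ p.2 := by
        rw [one_mul, ← pow_add]; exact pow_le_pow_of_le_one (abs_nonneg q) hq.le hindex

theorem hasSum_eulerWeight_mul_pow_fiber {q : ℝ} (hq : |q| < 1) (n : ℕ) :
    HasSum (fun k => eulerWeight (n, k) * q ^ eulerIndex (n, k)) (-Real.log (1 - q ^ (n + 2))) := by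
  simpa [eulerWeight, eulerIndex, pow_mul, div_eq_inv_mul] using
    Real.hasSum_pow_div_log_of_abs_lt_one (abs_pow_lt_one hq (n := n + 2) (by omega))

theorem tsum_eulerWeight_mul_zero_pow : ∑' p, eulerWeight p * (0 : ℝ) ^ eulerIndex p = 0 := by
  simp [eulerIndex]

theorem Fmu_eq_exp {μ q : ℝ} (hq : |q| < 1) :
    Fmu μ q = Real.exp (μ * ∑' p, eulerWeight p * q ^ eulerIndex p) := by
  have hlog := (summable_eulerWeight_mul_pow hq).hasSum.prod_fiberwise
    (hasSum_eulerWeight_mul_pow_fiber hq)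
  rw [Fmu, ← (hlog.mul_left μ).rexp.tprod_eq]
  refine tprod_congr fun n => ?_
  have hpos : 0 < 1 - q ^ (n + 2) :=
    sub_pos.2 ((le_abs_self _).trans_lt (abs_pow_lt_one hq (by omega)))
  rw [Function.comp_apply, Real.rpow_def_of_pos hpos]
  ring_nf

theorem hasFPowerSeriesAt_Fmu (μ : ℝ) :
    HasFPowerSeriesAt (Fmu μ)
      ((NormedSpace.expSeries ℝ ℝ).comp (ofScalars ℝ (μ • eulerLogCoeff))) 0 := by
  have hlog := (hasFPowerSeriesOnBall_tsum_mul_pow eulerIndex eulerWeight one_pos fun y hy =>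
    summable_eulerWeight_mul_pow (by simpa using hy)).hasFPowerSeriesAt.const_smul (c := μ)
  rw [← ofScalars_smul] at hlog
  refine (hlog.rexp_comp (by simp [tsum_eulerWeight_mul_zero_pow])).congr ?_
  filter_upwards [Metric.ball_mem_nhds (0 : ℝ) one_pos] with q hq
  exact (Fmu_eq_exp (by simpa using hq)).symm

/-- For `μ > 0`, all Taylor coefficients of `F_μ` at `0` are nonnegative, and the
zeroth coefficient equals `1`. -/
theorem taylorCoeff_Fmu_nonneg (μ : ℝ) (hμ : 0 < μ) :
    (∀ n : ℕ, 0 ≤ taylorCoeff (Fmu μ) n) ∧ taylorCoeff (Fmu μ) 0 = 1 := by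
  refine ⟨fun n => ?_, ?_⟩
  · rw [(hasFPowerSeriesAt_Fmu μ).taylorCoeff_eq_coeff]
    refine coeff_comp_nonneg NormedSpace.coeff_expSeries_nonneg (fun m => ?_) n
    rw [coeff_ofScalars]
    exact mul_nonneg hμ.le (eulerLogCoeff_nonneg m)
  · rw [taylorCoeff, iteratedDeriv_zero, Fmu_eq_exp (by simp), tsum_eulerWeight_mul_zero_pow]
    simp
end

section
/- For every real number ν ≥ 1 and every integer n ≥ 0, the n-th Taylor coefficient a_n(ν) of F_ν at 0 is at least the number of partitions of n all of whose parts are at least 2 (which is the n-th Taylor coefficient of F_1). -/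
/-!
Taking logarithms, `F_ν = exp (ν ∑_{m ≥ 2} -log (1 - q^m))`. Splitting off the factors with
`2 ≤ m ≤ n + 1` once gives
`F_ν = (∏_{m=2}^{n+1} (1 - q^m)⁻¹) · exp (∑_{m ≥ 2} w_m (-log (1 - q^m)))`
with weights `w_m ∈ {ν - 1, ν}`, which are nonnegative as `ν ≥ 1`. Both factors have power series
with nonnegative coefficients (each `-log (1 - q^m)` has, and `exp` preserves this), and the second
one has constant term `1`. Hence `a_n(ν)` is at least the `n`-th coefficient of the finite product,
which counts the partitions of `n` into parts `2, …, n + 1`, i.e. all partitions of `n` into parts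
at least `2`.
-/

open PowerSeries Finset
open scoped Nat PowerSeries.WithPiTopology

namespace PowerSeries

variable {R ι : Type*}

section Semiring

variable [Semiring R]

theorem hasSum_coeff_of_summable [TopologicalSpace R] {Φ : ι → R⟦X⟧} (hΦ : Summable Φ) (m : ℕ) :
    HasSum (fun i => coeff m (Φ i)) (coeff m (∑' i, Φ i)) :=
  hΦ.hasSum.map (coeff m) (WithPiTopology.continuous_coeff R m)

theorem summable_of_X_pow_dvd [TopologicalSpace R] {Φ : ℕ → R⟦X⟧} (h : ∀ k, X ^ k ∣ Φ k) :
    Summable Φ := by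
  refine (WithPiTopology.summable_iff_summable_coeff R).mpr fun m =>
    summable_of_hasFiniteSupport <| (Set.finite_Iic m).subset fun k hk => ?_
  by_contra hkm
  exact hk (X_pow_dvd_iff.mp (h k) m (not_le.mp hkm))

theorem X_pow_dvd_tsum [TopologicalSpace R] [T2Space R] {Φ : ι → R⟦X⟧} {d : ℕ}
    (hΦ : Summable Φ) (h : ∀ i, X ^ d ∣ Φ i) : X ^ d ∣ ∑' i, Φ i :=
  X_pow_dvd_iff.mpr fun m hm =>
    (hasSum_coeff_of_summable hΦ m).unique (by simp [X_pow_dvd_iff.mp (h _) m hm])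

theorem coeff_mul_coeff_zero_le_coeff_mul [PartialOrder R] [IsOrderedRing R] {Φ Ψ : R⟦X⟧}
    (hΦ : ∀ m, 0 ≤ coeff m Φ) (hΨ : ∀ m, 0 ≤ coeff m Ψ) (n : ℕ) :
    coeff n Φ * coeff 0 Ψ ≤ coeff n (Φ * Ψ) := by
  rw [coeff_mul]
  exact single_le_sum (f := fun p : ℕ × ℕ => coeff p.1 Φ * coeff p.2 Ψ)
    (fun p _ => mul_nonneg (hΦ _) (hΨ _)) (a := (n, 0)) (by simp)

end Semiring

section CommSemiring

variable [CommSemiring R]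

theorem X_pow_dvd_smul_pow {Φ : R⟦X⟧} (hΦ : constantCoeff Φ = 0) (c : ℕ → R) (k : ℕ) :
    X ^ k ∣ c k • Φ ^ k :=
  dvd_smul_of_dvd (c k) (pow_dvd_pow_of_dvd (X_dvd_iff.mpr hΦ) k)

theorem summable_smul_pow [TopologicalSpace R] {Φ : R⟦X⟧} (hΦ : constantCoeff Φ = 0)
    (c : ℕ → R) : Summable fun k => c k • Φ ^ k :=
  summable_of_X_pow_dvd (X_pow_dvd_smul_pow hΦ c)

end CommSemiring

end PowerSeries

structure HasNonnegExpansion (f : ℝ → ℝ) (Φ : ℝ⟦X⟧) (r : ℝ) : Prop where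
  coeff_nonneg : ∀ m, 0 ≤ coeff m Φ
  hasSum : ∀ q, |q| < r → HasSum (fun m => coeff m Φ * q ^ m) (f q)

namespace HasNonnegExpansion

variable {f g : ℝ → ℝ} {Φ Ψ : ℝ⟦X⟧} {r : ℝ}

theorem congr (h : HasNonnegExpansion f Φ r) (hfg : ∀ q, |q| < r → f q = g q) :
    HasNonnegExpansion g Φ r :=
  ⟨h.coeff_nonneg, fun q hq => hfg q hq ▸ h.hasSum q hq⟩

theorem X_pow (d : ℕ) : HasNonnegExpansion (fun q => q ^ d) (X ^ d) r := by
  refine ⟨fun m => ?_, fun q _ => ?_⟩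
  · rw [coeff_X_pow]
    split_ifs <;> norm_num
  · refine (hasSum_ite_eq d (q ^ d)).congr_fun fun m => ?_
    rw [coeff_X_pow]
    split_ifs with hm <;> simp [hm]

theorem one : HasNonnegExpansion (fun _ => 1) 1 r := by
  simpa using X_pow (r := r) 0

theorem smul (h : HasNonnegExpansion f Φ r) {c : ℝ} (hc : 0 ≤ c) :
    HasNonnegExpansion (fun q => c * f q) (c • Φ) r :=
  ⟨fun m => by simpa using mul_nonneg hc (h.coeff_nonneg m),
    fun q hq => by simpa [mul_assoc] using (h.hasSum q hq).mul_left c⟩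

theorem summable_norm (h : HasNonnegExpansion f Φ r) {q : ℝ} (hq : |q| < r) :
    Summable fun m => ‖coeff m Φ * q ^ m‖ := by
  refine (h.hasSum |q| (by rwa [abs_abs])).summable.congr fun m => ?_
  rw [norm_mul, norm_pow, Real.norm_eq_abs, Real.norm_eq_abs, abs_of_nonneg (h.coeff_nonneg m)]

theorem mul (hf : HasNonnegExpansion f Φ r) (hg : HasNonnegExpansion g Ψ r) :
    HasNonnegExpansion (fun q => f q * g q) (Φ * Ψ) r := by
  refine ⟨fun m => ?_, fun q hq => ?_⟩
  · rw [coeff_mul]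
    exact sum_nonneg fun p _ => mul_nonneg (hf.coeff_nonneg _) (hg.coeff_nonneg _)
  have hΦ := hf.summable_norm hq
  have hΨ := hg.summable_norm hq
  have hcauchy : ∀ m, coeff m (Φ * Ψ) * q ^ m =
      ∑ p ∈ antidiagonal m, coeff p.1 Φ * q ^ p.1 * (coeff p.2 Ψ * q ^ p.2) := fun m => by
    rw [coeff_mul, sum_mul]
    refine sum_congr rfl fun p hp => ?_
    rw [← mem_antidiagonal.mp hp, pow_add]
    ring
  simp_rw [hcauchy, ← (hf.hasSum q hq).tsum_eq, ← (hg.hasSum q hq).tsum_eq,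
    tsum_mul_tsum_eq_tsum_sum_antidiagonal_of_summable_norm hΦ hΨ]
  exact (summable_norm_sum_mul_antidiagonal_of_summable_norm hΦ hΨ).of_norm.hasSum

theorem pow (h : HasNonnegExpansion f Φ r) (k : ℕ) :
    HasNonnegExpansion (fun q => f q ^ k) (Φ ^ k) r := by
  induction k with
  | zero => simpa using one
  | succ k ih => simpa [pow_succ] using ih.mul h

theorem prod {ι : Type*} {s : Finset ι} {F : ι → ℝ → ℝ} {Φ : ι → ℝ⟦X⟧}
    (h : ∀ i ∈ s, HasNonnegExpansion (F i) (Φ i) r) :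
    HasNonnegExpansion (fun q => ∏ i ∈ s, F i q) (∏ i ∈ s, Φ i) r := by
  classical
  induction s using Finset.induction_on with
  | empty => simpa using one
  | insert a s ha ih =>
    simp_rw [prod_insert ha]
    exact (h a (mem_insert_self a s)).mul (ih fun i hi => h i (mem_insert_of_mem hi))

theorem tsum {ι : Type*} {F : ι → ℝ → ℝ} {Φ : ι → ℝ⟦X⟧}
    (h : ∀ i, HasNonnegExpansion (F i) (Φ i) r) (hΦ : Summable Φ)
    (hF : ∀ ρ, 0 ≤ ρ → ρ < r → Summable fun i => F i ρ) :
    HasNonnegExpansion (fun q => ∑' i, F i q) (∑' i, Φ i) r := by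
  refine ⟨fun m => (hasSum_coeff_of_summable hΦ m).nonneg fun i => (h i).coeff_nonneg m,
    fun q hq => ?_⟩
  have hq' : |(|q|)| < r := by rwa [abs_abs]
  have habs : Summable fun p : ι × ℕ => coeff p.2 (Φ p.1) * |q| ^ p.2 := by
    have hnn : 0 ≤ fun p : ι × ℕ => coeff p.2 (Φ p.1) * |q| ^ p.2 := fun p =>
      mul_nonneg ((h p.1).coeff_nonneg _) (pow_nonneg (abs_nonneg q) _)
    refine (summable_prod_of_nonneg hnn).mpr ⟨fun i => ((h i).hasSum _ hq').summable, ?_⟩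
    exact (hF |q| (abs_nonneg q) ((le_abs_self _).trans_lt hq')).congr fun i =>
      ((h i).hasSum _ hq').tsum_eq.symm
  have hG : Summable fun p : ι × ℕ => coeff p.2 (Φ p.1) * q ^ p.2 :=
    habs.of_norm_bounded fun p => by
      rw [norm_mul, norm_pow, Real.norm_eq_abs, Real.norm_eq_abs,
        abs_of_nonneg ((h p.1).coeff_nonneg _)]
  -- The double series converges absolutely, so it may be summed by rows or by columns.
  have hrows : HasSum (fun i => F i q) (∑' p : ι × ℕ, coeff p.2 (Φ p.1) * q ^ p.2) :=
    hG.hasSum.prod_fiberwise fun i => (h i).hasSum q hq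
  rw [hrows.tsum_eq]
  have hcols : HasSum (fun p : ℕ × ι => coeff p.1 (Φ p.2) * q ^ p.1)
      (∑' p : ι × ℕ, coeff p.2 (Φ p.1) * q ^ p.2) :=
    (Equiv.prodComm ℕ ι).hasSum_iff.mpr hG.hasSum
  exact hcols.prod_fiberwise fun m => (hasSum_coeff_of_summable hΦ m).mul_right (q ^ m)

theorem taylorCoeff_eq (h : HasNonnegExpansion f Φ r) (hr : 0 < r) (n : ℕ) :
    taylorCoeff f n = coeff n Φ := by
  obtain ⟨ρ, hρ0, hρr⟩ := exists_between hr
  set p := FormalMultilinearSeries.ofScalars ℝ fun m => coeff m Φ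
  have hρ : |ρ| < r := by rwa [abs_of_pos hρ0]
  have hp : HasFPowerSeriesOnBall f p 0 ρ.toNNReal := by
    refine ⟨p.le_radius_of_summable ((h.hasSum ρ hρ).summable.congr fun m => ?_), ?_,
      fun {y} hy => ?_⟩
    · rw [FormalMultilinearSeries.ofScalars_norm, Real.norm_eq_abs,
        abs_of_nonneg (h.coeff_nonneg m), Real.coe_toNNReal _ hρ0.le]
    · simpa using hρ0
    · have hy : |y| < r := by
        have : ‖y‖ < ρ := by simpa [hρ0.le] using hy
        exact (Real.norm_eq_abs y ▸ this).trans hρr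
      simpa [p, FormalMultilinearSeries.ofScalars_apply_eq, mul_comm] using h.hasSum y hy
  have hpf := hp.hasFPowerSeriesAt
  exact (congrFun (FormalMultilinearSeries.ofScalars_series_injective ℝ ℝ
    (hpf.analyticAt.hasFPowerSeriesAt.eq_formalMultilinearSeries hpf)) n)

end HasNonnegExpansion

noncomputable def expSeries (Φ : ℝ⟦X⟧) : ℝ⟦X⟧ := ∑' k, (k ! : ℝ)⁻¹ • Φ ^ k

theorem coeff_zero_expSeries {Φ : ℝ⟦X⟧} (hΦ : constantCoeff Φ = 0) :
    coeff 0 (expSeries Φ) = 1 := by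
  refine (hasSum_coeff_of_summable (summable_smul_pow hΦ _) 0).unique
    ((hasSum_ite_eq 0 (1 : ℝ)).congr_fun fun k => ?_)
  split_ifs with hk
  · simp [hk]
  · exact X_pow_dvd_iff.mp (X_pow_dvd_smul_pow hΦ (fun k => (k ! : ℝ)⁻¹) k) 0
      (Nat.pos_of_ne_zero hk)

theorem HasNonnegExpansion.exp {g : ℝ → ℝ} {Φ : ℝ⟦X⟧} {r : ℝ} (hg : HasNonnegExpansion g Φ r)
    (hΦ : constantCoeff Φ = 0) :
    HasNonnegExpansion (fun q => Real.exp (g q)) (expSeries Φ) r := by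
  refine (HasNonnegExpansion.tsum (fun k => (hg.pow k).smul (c := (k ! : ℝ)⁻¹) (by positivity))
    (summable_smul_pow hΦ _) fun ρ _ _ => ?_).congr fun q _ => ?_
  · simpa [div_eq_inv_mul] using Real.summable_pow_div_factorial (g ρ)
  · simp [Real.exp_eq_exp_ℝ, NormedSpace.exp_eq_tsum_div, div_eq_inv_mul]

theorem hasNonnegExpansion_inv_one_sub_pow {j : ℕ} (hj : 0 < j) :
    HasNonnegExpansion (fun q => (1 - q ^ j)⁻¹) (∑' i, X ^ (j * i)) 1 := by
  have hgeom : ∀ q : ℝ, |q| < 1 → HasSum (fun i => q ^ (j * i)) (1 - q ^ j)⁻¹ := fun q hq => by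
    simpa [pow_mul] using hasSum_geometric_of_abs_lt_one
      (by simpa using pow_lt_one₀ (abs_nonneg q) hq hj.ne')
  refine (HasNonnegExpansion.tsum (fun i => .X_pow (j * i))
    (summable_of_X_pow_dvd fun i => pow_dvd_pow X (Nat.le_mul_of_pos_left i hj))
    fun ρ hρ0 hρ => (hgeom ρ (abs_lt.mpr ⟨by linarith, hρ⟩)).summable).congr
    fun q hq => (hgeom q hq).tsum_eq

noncomputable def logSeries (j : ℕ) : ℝ⟦X⟧ := ∑' i : ℕ, (i + 1 : ℝ)⁻¹ • X ^ (j * (i + 1))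

theorem summable_logSeries_terms {j : ℕ} (hj : 0 < j) :
    Summable fun i : ℕ => (i + 1 : ℝ)⁻¹ • (X : ℝ⟦X⟧) ^ (j * (i + 1)) :=
  summable_of_X_pow_dvd fun i =>
    dvd_smul_of_dvd _ (pow_dvd_pow X ((Nat.le_succ i).trans (Nat.le_mul_of_pos_left _ hj)))

theorem X_pow_dvd_logSeries {j : ℕ} (hj : 0 < j) : X ^ j ∣ logSeries j :=
  X_pow_dvd_tsum (summable_logSeries_terms hj) fun i =>
    dvd_smul_of_dvd _ (pow_dvd_pow X (Nat.le_mul_of_pos_right j i.succ_pos))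

theorem summable_smul_logSeries (w : ℕ → ℝ) : Summable fun m => w m • logSeries (m + 2) :=
  summable_of_X_pow_dvd fun m => dvd_smul_of_dvd _
    ((pow_dvd_pow X (by omega)).trans (X_pow_dvd_logSeries (by omega)))

theorem constantCoeff_tsum_smul_logSeries (w : ℕ → ℝ) :
    constantCoeff (∑' m, w m • logSeries (m + 2)) = 0 :=
  X_dvd_iff.mp <| pow_one (X : ℝ⟦X⟧) ▸ X_pow_dvd_tsum (summable_smul_logSeries w) fun m =>
    dvd_smul_of_dvd _ ((pow_dvd_pow X (by omega)).trans (X_pow_dvd_logSeries (by omega)))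

theorem hasNonnegExpansion_neg_log_one_sub_pow {j : ℕ} (hj : 0 < j) :
    HasNonnegExpansion (fun q => -Real.log (1 - q ^ j)) (logSeries j) 1 := by
  have hlog : ∀ q : ℝ, |q| < 1 →
      HasSum (fun i : ℕ => (i + 1 : ℝ)⁻¹ * q ^ (j * (i + 1))) (-Real.log (1 - q ^ j)) :=
    fun q hq => by
      simpa [pow_mul, div_eq_inv_mul] using Real.hasSum_pow_div_log_of_abs_lt_one
        (by simpa using pow_lt_one₀ (abs_nonneg q) hq hj.ne')
  refine (HasNonnegExpansion.tsum (fun i => (HasNonnegExpansion.X_pow (j * (i + 1))).smul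
    (c := (i + 1 : ℝ)⁻¹) (by positivity)) (summable_logSeries_terms hj)
    fun ρ hρ0 hρ => (hlog ρ (abs_lt.mpr ⟨by linarith, hρ⟩)).summable).congr
    fun q hq => (hlog q hq).tsum_eq

theorem summable_neg_log_one_sub_pow {q : ℝ} (hq : |q| < 1) :
    Summable fun m : ℕ => -Real.log (1 - q ^ (m + 2)) := by
  have hgeom : Summable fun m : ℕ => -q ^ (m + 2) := by
    simpa [pow_add, mul_comm] using ((summable_geometric_of_abs_lt_one hq).mul_left (q ^ 2)).neg
  simpa [sub_eq_add_neg] using (Real.summable_log_one_add_of_summable hgeom).neg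

theorem hasNonnegExpansion_tsum_mul_neg_log {w : ℕ → ℝ} {C : ℝ} (hw0 : ∀ m, 0 ≤ w m)
    (hwC : ∀ m, w m ≤ C) :
    HasNonnegExpansion (fun q => ∑' m, w m * -Real.log (1 - q ^ (m + 2)))
      (∑' m, w m • logSeries (m + 2)) 1 := by
  refine HasNonnegExpansion.tsum
    (fun m => (hasNonnegExpansion_neg_log_one_sub_pow (by omega)).smul (hw0 m))
    (summable_smul_logSeries w) fun ρ hρ0 hρ => ?_
  have hL := summable_neg_log_one_sub_pow (abs_lt.mpr ⟨by linarith, hρ⟩)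
  have hL0 : ∀ m : ℕ, 0 ≤ -Real.log (1 - ρ ^ (m + 2)) := fun m =>
    neg_nonneg.mpr (Real.log_nonpos (by linarith [pow_le_one₀ hρ0 hρ.le (n := m + 2)])
      (by linarith [pow_nonneg hρ0 (m + 2)]))
  exact (hL.mul_left C).of_nonneg_of_le (fun m => mul_nonneg (hw0 m) (hL0 m))
    fun m => mul_le_mul_of_nonneg_right (hwC m) (hL0 m)

theorem Fmu_eq_mul_exp (ν : ℝ) (n : ℕ) {q : ℝ} (hq : |q| < 1) :
    Fmu ν q = (∏ m ∈ range n, (1 - q ^ (m + 2))⁻¹) *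
      Real.exp (∑' m, (ν - if m < n then 1 else 0) * -Real.log (1 - q ^ (m + 2))) := by
  set L : ℕ → ℝ := fun m => -Real.log (1 - q ^ (m + 2))
  have hpos : ∀ m : ℕ, 0 < 1 - q ^ (m + 2) := fun m =>
    sub_pos.mpr <| (le_abs_self _).trans_lt <| by
      rw [abs_pow]
      exact pow_lt_one₀ (abs_nonneg q) hq (by omega)
  have hL := summable_neg_log_one_sub_pow hq
  have hhead : HasSum (fun m => (if m < n then 1 else 0) * L m) (∑ m ∈ range n, L m) := by
    have h : HasSum (fun m => (if m < n then 1 else 0) * L m)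
        (∑ m ∈ range n, (if m < n then 1 else 0) * L m) :=
      hasSum_sum_of_ne_finset_zero fun m hm => by simp_all
    rwa [sum_congr rfl fun m hm => by rw [if_pos (mem_range.mp hm), one_mul]] at h
  have htail : Summable fun m => (ν - if m < n then 1 else 0) * L m :=
    ((hL.mul_left ν).sub hhead.summable).congr fun m => by ring
  have hsum : HasSum (fun m => ν * L m)
      (∑ m ∈ range n, L m + ∑' m, (ν - if m < n then 1 else 0) * L m) :=
    (hhead.add htail.hasSum).congr_fun fun m => by ring
  have hexp_head : ∏ m ∈ range n, (1 - q ^ (m + 2))⁻¹ = Real.exp (∑ m ∈ range n, L m) := by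
    rw [Real.exp_sum]
    exact prod_congr rfl fun m _ => by simp [L, Real.exp_neg, Real.exp_log (hpos m)]
  rw [hexp_head, ← Real.exp_add, ← hsum.rexp.tprod_eq, Fmu]
  exact tprod_congr fun m => by simp [L, Real.rpow_def_of_pos (hpos m), mul_comm]

theorem coeff_prod_tsum_X_pow_eq_partitionsMinTwo (n : ℕ) :
    coeff n (∏ m ∈ range n, ∑' i, (X : ℝ⟦X⟧) ^ ((m + 2) * i)) = partitionsMinTwo n := by
  classical
  -- Parts of a partition of `n` are at most `n`, so capping them at `n + 1` changes nothing
  -- and makes Mathlib's generating product finite.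
  let p : ℕ → Prop := fun i => 2 ≤ i ∧ i ≤ n + 1
  have hprod := Nat.Partition.hasProd_powerSeriesMk_card_restricted ℝ p
  have hfin := hprod.unique (hasProd_prod_of_ne_finset_one (s := range (n + 1))
    fun i hi => if_neg fun hpi => hi (mem_range.mpr (by omega)))
  rw [prod_range_succ', if_neg (by simp [p])] at hfin
  rw [prod_congr rfl fun m hm => if_pos ⟨by omega, by simp at hm; omega⟩] at hfin
  simp only [mul_one] at hfin
  rw [← hfin, coeff_mk, partitionsMinTwo, Nat.card_eq_fintype_card, Fintype.card_subtype,
    Nat.Partition.restricted]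
  congr 2
  ext x
  simp only [mem_filter, mem_univ, true_and, p]
  exact forall₂_congr fun i hi => and_iff_left (by linarith [Nat.Partition.le_of_mem_parts hi])

/-- For `ν ≥ 1`, the `n`-th Taylor coefficient of `F_ν` at `0` is at least the number
of partitions of `n` into parts at least `2` (the `n`-th Taylor coefficient of `F_1`). -/
theorem partitionsMinTwo_le_taylorCoeff_Fmu (ν : ℝ) (hν : 1 ≤ ν) (n : ℕ) :
    (partitionsMinTwo n : ℝ) ≤ taylorCoeff (Fmu ν) n := by
  set w : ℕ → ℝ := fun m => ν - if m < n then 1 else 0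
  have hw0 : ∀ m, 0 ≤ w m := fun m => by simp only [w]; split_ifs <;> linarith
  have hwν : ∀ m, w m ≤ ν := fun m => by simp only [w]; split_ifs <;> linarith
  have hhead := HasNonnegExpansion.prod fun m (_ : m ∈ range n) =>
    hasNonnegExpansion_inv_one_sub_pow (j := m + 2) (by omega)
  have hlog0 := constantCoeff_tsum_smul_logSeries w
  have htail := (hasNonnegExpansion_tsum_mul_neg_log hw0 hwν).exp hlog0
  have hF := (hhead.mul htail).congr fun q hq => (Fmu_eq_mul_exp ν n hq).symm
  rw [hF.taylorCoeff_eq one_pos, ← coeff_prod_tsum_X_pow_eq_partitionsMinTwo]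
  calc _ = _ * coeff 0 (expSeries _) := by rw [coeff_zero_expSeries hlog0, mul_one]
    _ ≤ _ := coeff_mul_coeff_zero_le_coeff_mul hhead.coeff_nonneg htail.coeff_nonneg n
end
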